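/- For every linear endomorphism A of ℝ^d and every integer k with 1 ≤ k ≤ d, the operator norm of the k-th exterior power A^{∧k} (with respect to the inner product on ∧^k ℝ^d induced by the standard inner product on ℝ^d) equals the product α_1(A)···α_k(A) of the k largest singular values of A. -/

import Mathlib

open scoped BigOperators

/-- `sval A k` : the (k+1)-st largest singular value of `A`, i.e. the square roots of the
eigenvalues of `Aᵀ * A` listed in decreasing order (0-indexed). -/
noncomputable def sval {d : ℕ} (A : Matrix (Fin d) (Fin d) ℝ) (k : Fin d) : ℝ :=
  (fun i => Real.sqrt ((show (A.transpose * A).IsHermitian by simpa [Matrix.conjTranspose_eq_transpose_of_trivial] using Matrix.isHermitian_conjTranspose_mul_self A).eigenvalues i))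
    (Tuple.sort (fun i => Real.sqrt ((show (A.transpose * A).IsHermitian by simpa [Matrix.conjTranspose_eq_transpose_of_trivial] using Matrix.isHermitian_conjTranspose_mul_self A).eigenvalues i)) k.rev)

/-- `svalNat A k` : the k-th singular value with 0-based natural index, 0 out of range. -/
noncomputable def svalNat {d : ℕ} (A : Matrix (Fin d) (Fin d) ℝ) (k : ℕ) : ℝ :=
  if h : k < d then sval A ⟨k, h⟩ else 0

/-- The singular value function φ^s: for 0 ≤ s ≤ d it is α_1(A)⋯α_{⌊s⌋}(A)·α_{⌈s⌉}(A)^{s-⌊s⌋},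
and |det A|^{s/d} for s ≥ d. -/
noncomputable def phi {d : ℕ} (s : ℝ) (A : Matrix (Fin d) (Fin d) ℝ) : ℝ :=
  if s ≤ d then
    (∏ i ∈ Finset.range ⌊s⌋₊, svalNat A i) * (svalNat A (⌈s⌉₊ - 1)) ^ (s - (⌊s⌋₊ : ℝ))
  else |A.det| ^ (s / (d : ℝ))

/-- The ℓ² (Euclidean) operator norm of a matrix. -/
noncomputable def opNorm {n : Type*} [Fintype n] [DecidableEq n] (A : Matrix n n ℝ) : ℝ :=
  ‖(Matrix.toEuclideanLin A).toContinuousLinearMap‖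

/-- The k-th compound matrix of `A`: the matrix of the k-th exterior power `A^{∧k}` in the
orthonormal basis `e_{i₁} ∧ ⋯ ∧ e_{i_k}` (i₁ < ⋯ < i_k) of `∧^k ℝ^d` with the induced inner
product. Rows/columns are indexed by k-element subsets of `Fin d`. -/
noncomputable def compound {d : ℕ} (A : Matrix (Fin d) (Fin d) ℝ) (k : ℕ) :
    Matrix {s : Finset (Fin d) // s.card = k} {s : Finset (Fin d) // s.card = k} ℝ :=
  fun S T => (Matrix.of fun i j : Fin k =>
    A ((S.1.orderIsoOfFin S.2 i : Fin d)) ((T.1.orderIsoOfFin T.2 j : Fin d))).det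

/-! The compound matrix `C_k` is multiplicative by the Cauchy–Binet formula, commutes with
transposition, and sends `diagonal v` to `diagonal (S ↦ ∏ x ∈ S, v x)`; in particular it maps
orthogonal matrices to orthogonal matrices. Diagonalising `Aᵀ * A = U * diagonal μ * Uᵀ` therefore
gives `‖C_k A‖² = ‖C_k (Aᵀ * A)‖ = ‖C_k (diagonal μ)‖ = max_S ∏ x ∈ S, μ x`, and the maximum over
`k`-subsets `S` is attained at the `k` largest eigenvalues `μ = α_i²`. -/

open Finset Function Equiv Matrix
open scoped Matrix.Norms.L2Operator

section OrderEmbOfFin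

variable {n : Type*} [LinearOrder n] {k : ℕ}

theorem Finset.prod_orderEmbOfFin {M : Type*} [CommMonoid M] (s : Finset n) (h : s.card = k)
    (f : n → M) : ∏ i, f (s.orderEmbOfFin h i) = ∏ x ∈ s, f x := by
  conv_rhs => rw [← map_orderEmbOfFin_univ s h, prod_map]
  rfl

theorem Finset.bijective_orderEmbOfFin_comp_perm :
    Bijective fun x : {s : Finset n // s.card = k} × Perm (Fin k) =>
      (⟨x.1.1.orderEmbOfFin x.1.2 ∘ x.2, (x.1.1.orderEmbOfFin x.1.2).injective.comp
        x.2.injective⟩ : {p : Fin k → n // Injective p}) := by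
  constructor
  · rintro ⟨S, τ⟩ ⟨T, υ⟩ h
    have hfun := congrArg Subtype.val h
    have hST : S = T := by
      have := congrArg Set.range hfun
      simp only [Set.range_comp, τ.range_eq_univ, υ.range_eq_univ, Set.image_univ,
        range_orderEmbOfFin] at this
      exact Subtype.ext (coe_inj.1 this)
    subst hST
    exact Prod.ext rfl (Equiv.ext fun i => (S.1.orderEmbOfFin S.2).injective (congrFun hfun i))
  · rintro ⟨p, hp⟩
    have hcard : (univ.image p).card = k := by
      rw [card_image_of_injective _ hp, card_univ, Fintype.card_fin]
    let e := (univ.image p).orderIsoOfFin hcard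
    let τ : Fin k → Fin k := fun i => e.symm ⟨p i, mem_image_of_mem p (mem_univ i)⟩
    have hτ : Injective τ := fun i j h => hp (by simpa [τ] using congrArg (fun x => (e x : n)) h)
    refine ⟨(⟨_, hcard⟩, Equiv.ofBijective τ (Finite.injective_iff_bijective.1 hτ)), ?_⟩
    ext i
    simp only [Function.comp_apply, Equiv.ofBijective_apply, τ, ← coe_orderIsoOfFin_apply,
      OrderIso.apply_symm_apply, e]

end OrderEmbOfFin

namespace Matrix

variable {R : Type*} [CommRing R]

theorem det_mul_eq_sum_prod_mul_det_submatrix {m n : Type*} [Fintype m] [DecidableEq m]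
    [Fintype n] [DecidableEq n] (M : Matrix m n R) (N : Matrix n m R) :
    (M * N).det = ∑ p : m → n, (∏ i, N (p i) i) * (M.submatrix id p).det := by
  simp only [det_apply', mul_apply, prod_univ_sum, mul_sum, Fintype.piFinset_univ,
    submatrix_apply, id, prod_mul_distrib]
  rw [sum_comm]
  refine sum_congr rfl fun p _ => sum_congr rfl fun σ _ => ?_
  ring

theorem det_submatrix_eq_zero_of_not_injective {m n : Type*} [Fintype m] [DecidableEq m]
    (M : Matrix m n R) {p : m → n} (hp : ¬Injective p) : (M.submatrix id p).det = 0 := by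
  obtain ⟨i, j, hij, hne⟩ := not_injective_iff.1 hp
  exact det_zero_of_column_eq hne fun r => by simp [hij]

theorem det_mul_eq_sum_det_submatrix_mul_det_submatrix {n : Type*} [Fintype n]
    [LinearOrder n] {k : ℕ} (M : Matrix (Fin k) n R) (N : Matrix n (Fin k) R) :
    (M * N).det = ∑ S : {s : Finset n // s.card = k},
      (M.submatrix id (S.1.orderEmbOfFin S.2)).det *
        (N.submatrix (S.1.orderEmbOfFin S.2) id).det := by
  calc (M * N).det = ∑ p : Fin k → n, (∏ i, N (p i) i) * (M.submatrix id p).det :=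
        det_mul_eq_sum_prod_mul_det_submatrix M N
    _ = ∑ p : {p : Fin k → n // Injective p}, (∏ i, N (p.1 i) i) * (M.submatrix id p.1).det := by
        refine (sum_filter_of_ne (p := Injective) fun p _ hp => ?_).symm.trans
          (sum_subtype _ (fun p => by simp) _)
        contrapose! hp
        rw [det_submatrix_eq_zero_of_not_injective M hp, mul_zero]
    _ = ∑ x : {s : Finset n // s.card = k} × Perm (Fin k),
          (∏ i, N (x.1.1.orderEmbOfFin x.1.2 (x.2 i)) i) *
            (M.submatrix id (x.1.1.orderEmbOfFin x.1.2 ∘ x.2)).det :=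
        (Fintype.sum_bijective _ bijective_orderEmbOfFin_comp_perm _ _ fun _ => rfl).symm
    _ = ∑ S : {s : Finset n // s.card = k}, ∑ τ : Perm (Fin k),
          (M.submatrix id (S.1.orderEmbOfFin S.2)).det *
            (Perm.sign τ * ∏ i, N (S.1.orderEmbOfFin S.2 (τ i)) i) := by
        rw [Fintype.sum_prod_type]
        refine sum_congr rfl fun S _ => sum_congr rfl fun τ _ => ?_
        rw [show M.submatrix id (S.1.orderEmbOfFin S.2 ∘ τ)
            = (M.submatrix id (S.1.orderEmbOfFin S.2)).submatrix id τ from rfl, det_permute']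
        ring
    _ = _ := by
        simp only [det_apply', submatrix_apply, id, mul_sum]

end Matrix

section Compound

variable {d : ℕ}

theorem compound_apply (A : Matrix (Fin d) (Fin d) ℝ) (k : ℕ)
    (S T : {s : Finset (Fin d) // s.card = k}) :
    compound A k S T = (A.submatrix (S.1.orderEmbOfFin S.2) (T.1.orderEmbOfFin T.2)).det :=
  rfl

theorem compound_mul (A B : Matrix (Fin d) (Fin d) ℝ) (k : ℕ) :
    compound (A * B) k = compound A k * compound B k := by
  ext S T
  rw [compound_apply, mul_apply, submatrix_mul A B _ id _ bijective_id]
  exact det_mul_eq_sum_det_submatrix_mul_det_submatrix _ _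

theorem compound_transpose (A : Matrix (Fin d) (Fin d) ℝ) (k : ℕ) :
    compound Aᵀ k = (compound A k)ᵀ :=
  ext fun S T => det_transpose (A.submatrix (T.1.orderEmbOfFin T.2) (S.1.orderEmbOfFin S.2))

theorem compound_diagonal (v : Fin d → ℝ) (k : ℕ) :
    compound (diagonal v) k =
      diagonal fun S : {s : Finset (Fin d) // s.card = k} => ∏ x ∈ S.1, v x := by
  ext S T
  rw [compound_apply]
  rcases eq_or_ne S T with rfl | hST
  · rw [submatrix_diagonal _ _ (S.1.orderEmbOfFin S.2).injective, det_diagonal, diagonal_apply_eq]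
    exact prod_orderEmbOfFin S.1 S.2 v
  · obtain ⟨x, hxT, hxS⟩ : ∃ x ∈ T.1, x ∉ S.1 := not_subset.1 fun hTS =>
      hST (Subtype.ext (eq_of_subset_of_card_le hTS (by rw [S.2, T.2]))).symm
    obtain ⟨j, rfl⟩ : x ∈ Set.range (T.1.orderEmbOfFin T.2) := by
      rwa [range_orderEmbOfFin]
    rw [diagonal_apply_ne _ hST]
    refine det_eq_zero_of_column_eq_zero j fun i => diagonal_apply_ne _ fun h => hxS ?_
    exact h ▸ orderEmbOfFin_mem S.1 S.2 i

theorem compound_one (k : ℕ) : compound (1 : Matrix (Fin d) (Fin d) ℝ) k = 1 := by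
  simp [← diagonal_one, compound_diagonal]

theorem compound_star (A : Matrix (Fin d) (Fin d) ℝ) (k : ℕ) :
    compound (star A) k = star (compound A k) := by
  simp only [star_eq_conjTranspose, conjTranspose_eq_transpose_of_trivial, compound_transpose]

noncomputable def compoundStarMonoidHom (d k : ℕ) :
    Matrix (Fin d) (Fin d) ℝ →⋆*
      Matrix {s : Finset (Fin d) // s.card = k} {s : Finset (Fin d) // s.card = k} ℝ where
  toFun A := compound A k
  map_one' := compound_one k
  map_mul' A B := compound_mul A B k
  map_star' A := compound_star A k

theorem Fin.val_le_of_strictMono {k : ℕ} {f : Fin k → Fin d} (hf : StrictMono f) (i : Fin k) :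
    (i : ℕ) ≤ f i := by
  simpa using card_le_card_of_injOn f (fun j hj => by simpa using hf (by simpa using hj))
    hf.injective.injOn (s := Iio i) (t := Iio (f i))

theorem Finset.prod_le_prod_castLE_of_antitone {R : Type*} [CommMonoidWithZero R] [Preorder R]
    [ZeroLEOneClass R] [PosMulMono R] {g : Fin d → R} (hg : Antitone g) (h0 : ∀ i, 0 ≤ g i)
    {k : ℕ} (hkd : k ≤ d) (s : Finset (Fin d)) (hs : s.card = k) :
    ∏ x ∈ s, g x ≤ ∏ i : Fin k, g (Fin.castLE hkd i) := by
  rw [← prod_orderEmbOfFin s hs]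
  exact prod_le_prod (fun i _ => h0 _) fun i _ =>
    hg (Fin.le_iff_val_le_val.2 (Fin.val_le_of_strictMono (s.orderEmbOfFin hs).strictMono i))

theorem pi_norm_eq_of_forall_abs_le {ι : Type*} [Fintype ι] {v : ι → ℝ} {j : ι}
    (h : ∀ i, |v i| ≤ v j) : ‖v‖ = v j :=
  le_antisymm ((pi_norm_le_iff_of_nonneg ((abs_nonneg _).trans (h j))).2 fun i => h i)
    ((le_abs_self _).trans (norm_le_pi_norm v j))

theorem opNorm_eq_l2_opNorm {n : Type*} [Fintype n] [DecidableEq n] (A : Matrix n n ℝ) :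
    opNorm A = ‖A‖ :=
  rfl

theorem Matrix.isHermitian_transpose_mul_self {n : Type*} [Fintype n] (A : Matrix n n ℝ) :
    (Aᵀ * A).IsHermitian :=
  isHermitian_conjTranspose_mul_self A

theorem eigenvalues_transpose_mul_self_nonneg {n : Type*} [Fintype n] [DecidableEq n]
    (A : Matrix n n ℝ) (i : n) : 0 ≤ (isHermitian_transpose_mul_self A).eigenvalues i :=
  eigenvalues_conjTranspose_mul_self_nonneg A i

theorem sq_norm_compound (A : Matrix (Fin d) (Fin d) ℝ) (k : ℕ) :
    ‖compound A k‖ ^ 2 = ‖fun S : {s : Finset (Fin d) // s.card = k} =>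
      ∏ x ∈ S.1, (isHermitian_transpose_mul_self A).eigenvalues x‖ := by
  set hA := isHermitian_transpose_mul_self A
  have hU : compound hA.eigenvectorUnitary k ∈ unitary _ :=
    Unitary.map_mem (compoundStarMonoidHom d k) hA.eigenvectorUnitary.2
  calc ‖compound A k‖ ^ 2 = ‖(compound A k)ᴴ * compound A k‖ := by
        rw [sq, l2_opNorm_conjTranspose_mul_self]
    _ = ‖compound hA.eigenvectorUnitary k * compound (diagonal hA.eigenvalues) k *
          star (compound hA.eigenvectorUnitary k)‖ := by
        rw [conjTranspose_eq_transpose_of_trivial, ← compound_transpose, ← compound_mul,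
          congrArg (compound · k) hA.spectral_theorem]
        simp [Unitary.conjStarAlgAut_apply, compound_mul, compound_star,
          RCLike.ofReal_real_eq_id]
    _ = ‖compound (diagonal hA.eigenvalues) k‖ := by
        rw [CStarRing.norm_mul_mem_unitary _ (Unitary.star_mem hU),
          CStarRing.norm_mem_unitary_mul _ hU]
    _ = _ := by rw [compound_diagonal, l2_opNorm_diagonal]

/-- `sval A j = √(μ (svalPerm A j))` unfolds from the definition of `sval`, `μ` being the
eigenvalues of `Aᵀ * A`. -/
noncomputable def svalPerm (A : Matrix (Fin d) (Fin d) ℝ) : Perm (Fin d) :=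
  Fin.revPerm.trans (Tuple.sort fun i => √((isHermitian_transpose_mul_self A).eigenvalues i))

theorem sval_sq (A : Matrix (Fin d) (Fin d) ℝ) (j : Fin d) :
    sval A j ^ 2 = (isHermitian_transpose_mul_self A).eigenvalues (svalPerm A j) :=
  Real.sq_sqrt (eigenvalues_transpose_mul_self_nonneg A _)

theorem sval_nonneg (A : Matrix (Fin d) (Fin d) ℝ) (j : Fin d) : 0 ≤ sval A j :=
  Real.sqrt_nonneg _

theorem sval_antitone (A : Matrix (Fin d) (Fin d) ℝ) : Antitone (sval A) := fun _ _ h =>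
  Tuple.monotone_sort (fun i => √((isHermitian_transpose_mul_self A).eigenvalues i))
    (Fin.rev_anti h)

theorem norm_prod_eigenvalues_transpose_mul_self (A : Matrix (Fin d) (Fin d) ℝ) {k : ℕ}
    (hkd : k ≤ d) :
    ‖fun S : {s : Finset (Fin d) // s.card = k} =>
      ∏ x ∈ S.1, (isHermitian_transpose_mul_self A).eigenvalues x‖ =
      ∏ i : Fin k, sval A (Fin.castLE hkd i) ^ 2 := by
  set e := svalPerm A
  have hsorted : ∀ s : Finset (Fin d), ∏ x ∈ s, (isHermitian_transpose_mul_self A).eigenvalues x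
      = ∏ y ∈ s.map e.symm.toEmbedding, sval A y ^ 2 := fun s => by
    simp [prod_map, sval_sq, e]
  let top : {s : Finset (Fin d) // s.card = k} :=
    ⟨(univ.map (Fin.castLEEmb hkd)).map e.toEmbedding, by simp⟩
  have htop : ∏ x ∈ top.1, (isHermitian_transpose_mul_self A).eigenvalues x
      = ∏ i : Fin k, sval A (Fin.castLE hkd i) ^ 2 := by
    simp [top, prod_map, sval_sq, e]
  rw [← htop]
  refine pi_norm_eq_of_forall_abs_le fun S => ?_
  rw [abs_of_nonneg (prod_nonneg fun x _ => eigenvalues_transpose_mul_self_nonneg A x), htop,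
    hsorted]
  exact prod_le_prod_castLE_of_antitone
    (fun i j hij => pow_le_pow_left₀ (sval_nonneg A _) (sval_antitone A hij) 2)
    (fun _ => sq_nonneg _) hkd _ (by simp [S.2])

theorem prod_range_svalNat (A : Matrix (Fin d) (Fin d) ℝ) {k : ℕ} (hkd : k ≤ d) :
    ∏ i ∈ range k, svalNat A i = ∏ i : Fin k, sval A (Fin.castLE hkd i) := by
  rw [← Fin.prod_univ_eq_prod_range]
  exact prod_congr rfl fun i _ => dif_pos (i.2.trans_le hkd)

end Compound

theorem opNorm_exteriorPower_eq_prod_singularValues_general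
    {d : ℕ} (A : Matrix (Fin d) (Fin d) ℝ) (k : ℕ) (hkd : k ≤ d) :
    opNorm (compound A k) = ∏ i ∈ Finset.range k, svalNat A i := by
  rw [prod_range_svalNat A hkd, opNorm_eq_l2_opNorm,
    ← sq_eq_sq₀ (norm_nonneg _) (prod_nonneg fun i _ => sval_nonneg A _), sq_norm_compound,
    norm_prod_eigenvalues_transpose_mul_self A hkd, prod_pow]

/-- the operator norm of the k-th exterior power of `A` (computed in the
orthonormal basis of `∧^k ℝ^d` induced by the standard inner product, i.e. the operator norm
of the k-th compound matrix) equals the product of the k largest singular values of `A`. -/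
theorem opNorm_exteriorPower_eq_prod_singularValues
    {d : ℕ} (A : Matrix (Fin d) (Fin d) ℝ) (k : ℕ) (hk1 : 1 ≤ k) (hkd : k ≤ d) :
    opNorm (compound A k) = ∏ i ∈ Finset.range k, svalNat A i :=
  opNorm_exteriorPower_eq_prod_singularValues_general A k hkd
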